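/- The infinite sequence of 2-element subsets 12, 13, 23, 34, 35, 45, 56, 57, 67, 78, 79, 89, ... (obtained by repeatedly appending {a,a+2}, {a+1,a+2}, {a+2,a+3} after a term {a,a+1}) has the property that for every n >= 3, its first ceil(3n/2) - 2 terms form a monotone weakly separated path from {1,2} to {n-1,n}. -/

import Mathlib

/-- The simple transposition `s_i = (i, i+1)` (1-indexed values) in `S_n`,
realized on `Fin n` (0-indexed positions `i-1` and `i`); junk value `1` otherwise. -/
def sgen (n i : ℕ) : Equiv.Perm (Fin n) :=
  if h : 0 < i ∧ i < n then Equiv.swap ⟨i - 1, by omega⟩ ⟨i, h.2⟩ else 1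

/-- `l` is a reduced word for `w ∈ S_n`: its product is `w` and it has minimal length. -/
def IsReducedWordFor (n : ℕ) (l : List ℕ) (w : Equiv.Perm (Fin n)) : Prop :=
  (l.map (sgen n)).prod = w ∧
    ∀ l' : List ℕ, (l'.map (sgen n)).prod = w → l.length ≤ l'.length

/-- The longest permutation `w_0 = n (n-1) ⋯ 2 1` of `S_n`. -/
def longestPerm (n : ℕ) : Equiv.Perm (Fin n) := Fin.revPerm

/-- `M(k,n)`: the maximum multiplicity of `s_k` among reduced words of `w_0 ∈ S_n`. -/
noncomputable def Mmax (k n : ℕ) : ℕ :=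
  sSup {N | ∃ l : List ℕ, IsReducedWordFor n l (longestPerm n) ∧ l.count k = N}

/-- Two finite sets are weakly separated. -/
def WeaklySeparated (I J : Finset ℕ) : Prop :=
  (∀ a ∈ I \ J, ∀ b ∈ J \ I, a < b) ∨ (∀ b ∈ J \ I, ∀ a ∈ I \ J, b < a)

/-- A monotone weakly separated path: pairwise weakly separated, and each step removes
one element `y` and adds one element `x > y`. -/
def IsMWSPath (P : List (Finset ℕ)) : Prop :=
  (∀ A ∈ P, ∀ B ∈ P, WeaklySeparated A B) ∧
    List.Chain' (fun A B => ∃ x y, y ∈ A ∧ x ∉ A ∧ y < x ∧ B = insert x (A.erase y)) P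

/-- The infinite sequence `12, 13, 23, 34, 35, 45, 56, 57, 67, 78, …` of 2-element sets. -/
def twoSeq : ℕ → Finset ℕ
  | 0 => {1, 2}
  | (i + 1) =>
      match i % 3 with
      | 0 => {2 * (i / 3) + 1, 2 * (i / 3) + 3}
      | 1 => {2 * (i / 3) + 2, 2 * (i / 3) + 3}
      | _ => {2 * (i / 3) + 3, 2 * (i / 3) + 4}

/-!
Every term of the sequence is a consecutive pair `{a, a + 1}` or an odd skip `{2a + 1, 2a + 3}`.
Two such pairs never interleave: nothing lies strictly inside a consecutive pair, and the only
integer strictly inside an odd skip is even, hence lies in no odd skip, while a consecutive pair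
through it meets the skip. So all terms are pairwise weakly separated. Each step
`{2k+1, 2k+2} → {2k+1, 2k+3} → {2k+2, 2k+3} → {2k+3, 2k+4}` exchanges one element for a larger
one, and the term of index `⌈3n/2⌉ - 3` is `{n - 1, n}`.
-/

theorem twoSeq_three_mul (k : ℕ) : twoSeq (3 * k) = {2 * k + 1, 2 * k + 2} := by
  cases k with
  | zero => rfl
  | succ k =>
    rw [show 3 * (k + 1) = 3 * k + 2 + 1 by ring, twoSeq]
    simp only [show (3 * k + 2) % 3 = 2 by omega, show (3 * k + 2) / 3 = k by omega]
    congr 1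

theorem twoSeq_three_mul_add_one (k : ℕ) : twoSeq (3 * k + 1) = {2 * k + 1, 2 * k + 3} := by
  simp only [twoSeq, show 3 * k % 3 = 0 by omega, show 3 * k / 3 = k by omega]

theorem twoSeq_three_mul_add_two (k : ℕ) : twoSeq (3 * k + 2) = {2 * k + 2, 2 * k + 3} := by
  simp only [twoSeq, show (3 * k + 1) % 3 = 1 by omega, show (3 * k + 1) / 3 = k by omega]

theorem weaklySeparated_of_forall_lt_imp_lt {I J : Finset ℕ}
    (h : ∀ a ∈ I \ J, ∀ b ∈ J \ I, ∀ a' ∈ I \ J, ∀ b' ∈ J \ I, a < b → a' < b') :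
    WeaklySeparated I J := by
  by_cases hlt : ∀ a ∈ I \ J, ∀ b ∈ J \ I, a < b
  · exact Or.inl hlt
  · push Not at hlt
    obtain ⟨a, ha, b, hb, hba⟩ := hlt
    refine Or.inr fun b' hb' a' ha' => lt_of_le_of_ne (not_lt.1 fun hab' => ?_) ?_
    · exact absurd (h a' ha' b' hb' a ha b hb hab') (not_lt.2 hba)
    · rintro rfl
      exact (Finset.mem_sdiff.1 hb').2 (Finset.mem_sdiff.1 ha').1

def IsConsecutiveOrOddSkip (s : Finset ℕ) : Prop :=
  (∃ a, s = {a, a + 1}) ∨ ∃ a, s = {2 * a + 1, 2 * a + 3}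

theorem twoSeq_isConsecutiveOrOddSkip (m : ℕ) : IsConsecutiveOrOddSkip (twoSeq m) := by
  obtain ⟨k, rfl | rfl | rfl⟩ : ∃ k, m = 3 * k ∨ m = 3 * k + 1 ∨ m = 3 * k + 2 :=
    ⟨m / 3, by omega⟩
  · exact Or.inl ⟨2 * k + 1, twoSeq_three_mul k⟩
  · exact Or.inr ⟨k, twoSeq_three_mul_add_one k⟩
  · exact Or.inl ⟨2 * k + 2, twoSeq_three_mul_add_two k⟩

theorem IsConsecutiveOrOddSkip.weaklySeparated {I J : Finset ℕ} (hI : IsConsecutiveOrOddSkip I)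
    (hJ : IsConsecutiveOrOddSkip J) : WeaklySeparated I J := by
  refine weaklySeparated_of_forall_lt_imp_lt fun a ha b hb a' ha' b' hb' hab => ?_
  rcases hI with ⟨p, rfl⟩ | ⟨p, rfl⟩ <;> rcases hJ with ⟨q, rfl⟩ | ⟨q, rfl⟩ <;>
    simp only [Finset.mem_sdiff, Finset.mem_insert, Finset.mem_singleton] at ha hb ha' hb' <;>
    omega

def IsMonotoneStep (A B : Finset ℕ) : Prop :=
  ∃ x y, y ∈ A ∧ x ∉ A ∧ y < x ∧ B = insert x (A.erase y)

theorem isMonotoneStep_pair {y z x : ℕ} (hyz : y ≠ z) (hxz : x ≠ z) (hyx : y < x) :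
    IsMonotoneStep {y, z} {x, z} := by
  refine ⟨x, y, by simp, by simp [hyx.ne', hxz], hyx, ?_⟩
  rw [Finset.erase_insert (by simpa using hyz)]

theorem isMonotoneStep_twoSeq (m : ℕ) : IsMonotoneStep (twoSeq m) (twoSeq (m + 1)) := by
  obtain ⟨k, rfl | rfl | rfl⟩ : ∃ k, m = 3 * k ∨ m = 3 * k + 1 ∨ m = 3 * k + 2 :=
    ⟨m / 3, by omega⟩
  · rw [twoSeq_three_mul, twoSeq_three_mul_add_one, Finset.pair_comm,
      Finset.pair_comm _ (2 * k + 3)]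
    exact isMonotoneStep_pair (by omega) (by omega) (by omega)
  · rw [twoSeq_three_mul_add_one, twoSeq_three_mul_add_two]
    exact isMonotoneStep_pair (by omega) (by omega) (by omega)
  · rw [twoSeq_three_mul_add_two, show 3 * k + 2 + 1 = 3 * (k + 1) by ring, twoSeq_three_mul,
      Finset.pair_comm (2 * (k + 1) + 1), show 2 * (k + 1) + 1 = 2 * k + 3 by ring]
    exact isMonotoneStep_pair (by omega) (by omega) (by omega)

theorem twoSeq_last (n : ℕ) (hn : 2 ≤ n) : twoSeq ((3 * n + 1) / 2 - 3) = {n - 1, n} := by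
  obtain ⟨j, rfl | rfl⟩ := Nat.even_or_odd' n
  · obtain ⟨k, rfl⟩ : ∃ k, j = k + 1 := ⟨j - 1, by omega⟩
    rw [show (3 * (2 * (k + 1)) + 1) / 2 - 3 = 3 * k by omega, twoSeq_three_mul]
    congr 1
  · obtain ⟨k, rfl⟩ : ∃ k, j = k + 1 := ⟨j - 1, by omega⟩
    rw [show (3 * (2 * (k + 1) + 1) + 1) / 2 - 3 = 3 * k + 2 by omega, twoSeq_three_mul_add_two]
    congr 1

theorem stmt14 (n : ℕ) (hn : 3 ≤ n) :
    IsMWSPath ((List.range ((3 * n + 1) / 2 - 2)).map twoSeq) ∧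
    ((List.range ((3 * n + 1) / 2 - 2)).map twoSeq).head? = some {1, 2} ∧
    ((List.range ((3 * n + 1) / 2 - 2)).map twoSeq).getLast? = some {n - 1, n} := by
  obtain ⟨K, hK⟩ : ∃ K, (3 * n + 1) / 2 - 2 = K + 1 := ⟨(3 * n + 1) / 2 - 3, by omega⟩
  rw [hK]
  refine ⟨⟨?_, ?_⟩, ?_, ?_⟩
  · simp only [List.mem_map]
    rintro _ ⟨i, -, rfl⟩ _ ⟨j, -, rfl⟩
    exact (twoSeq_isConsecutiveOrOddSkip i).weaklySeparated (twoSeq_isConsecutiveOrOddSkip j)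
  · rw [List.Chain', List.isChain_map, List.isChain_range_succ]
    exact fun m _ => isMonotoneStep_twoSeq m
  · simp [List.range_succ_eq_map, twoSeq]
  · rw [List.getLast?_map, List.range_succ, List.getLast?_concat, Option.map_some,
      show K = (3 * n + 1) / 2 - 3 by omega, twoSeq_last n (by omega)]
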